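/- With the setup of weighted row sampling: if X is a random variable equal to (u(i)/P_i)·A(i,·) with probability P_i, where P_i = Σ_{ℓ=1}^τ ‖A_ℓ(i,·)‖² / Σ_{ℓ'} ‖A_{ℓ'}‖_F², A = Σ_ℓ A_ℓ, and u ∈ ℂⁿ is a unit vector, then E[X] = u†A, and E‖X − u†A‖² ≤ (τ/1)·Σ_ℓ ‖A_ℓ‖_F² (i.e., the second moment of each sample is bounded by τ Σ_ℓ ‖A_ℓ‖_F²). -/

import Mathlib

open Matrix MeasureTheory
open scoped BigOperators

noncomputable def frobNorm {m n : Type*} [Fintype m] [Fintype n] (M : Matrix m n ℂ) : ℝ :=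
  Real.sqrt (∑ i, ∑ j, ‖M i j‖ ^ 2)

noncomputable def specNorm {m n : Type*} [Fintype m] [Fintype n] [DecidableEq n]
    (M : Matrix m n ℂ) : ℝ :=
  ‖LinearMap.toContinuousLinearMap (Matrix.toEuclideanLin M)‖

noncomputable def vnorm {n : Type*} [Fintype n] (v : n → ℂ) : ℝ :=
  Real.sqrt (∑ i, ‖v i‖ ^ 2)

/-!
Unbiasedness: `P i • X i = conj (u i) • A i`, also on rows with `P i = 0`, since `hPpos` forces
those rows of `A` to vanish. For the bound, the variance is at most the second moment, and
`P i ‖X i‖² = |u i|² ‖A i‖² / P i ≤ τ |u i|² Σ_ℓ ‖A_ℓ‖_F²` because Cauchy–Schwarz over `ℓ` gives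
`‖A i‖² ≤ τ Σ_ℓ ‖A_ℓ i‖² = τ P i Σ_ℓ ‖A_ℓ‖_F²`; summing over `i` with `Σ |u i|² = 1` concludes.
-/

theorem integral_sum_ofReal_smul_dirac {ι E : Type*} [Fintype ι] [MeasurableSpace ι]
    [MeasurableSingletonClass ι] [NormedAddCommGroup E] [NormedSpace ℝ E] [CompleteSpace E]
    {P : ι → ℝ} (hP : ∀ i, 0 ≤ P i) (f : ι → E) :
    ∫ i, f i ∂(Measure.sum fun i => ENNReal.ofReal (P i) • Measure.dirac i) = ∑ i, P i • f i := by
  rw [Measure.sum_fintype, integral_finsetSum_measure fun i _ =>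
    Integrable.of_finite.smul_measure ENNReal.ofReal_ne_top]
  simp [integral_smul_measure, ENNReal.toReal_ofReal (hP _)]

theorem sum_mul_norm_sub_sq_eq {ι E : Type*} [NormedAddCommGroup E] [InnerProductSpace ℝ E]
    {s : Finset ι} {w : ι → ℝ} {x : ι → E} (hw : ∑ i ∈ s, w i = 1) :
    ∑ i ∈ s, w i * ‖x i - ∑ k ∈ s, w k • x k‖ ^ 2 =
      ∑ i ∈ s, w i * ‖x i‖ ^ 2 - ‖∑ k ∈ s, w k • x k‖ ^ 2 := by
  set m := ∑ k ∈ s, w k • x k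
  have hinner : ∑ i ∈ s, w i * inner ℝ (x i) m = ‖m‖ ^ 2 := by
    simp only [← real_inner_smul_left, ← sum_inner, real_inner_self_eq_norm_sq, m]
  simp only [norm_sub_sq_real, mul_sub, mul_add, Finset.sum_add_distrib, Finset.sum_sub_distrib,
    ← Finset.sum_mul, hw]
  simp only [mul_left_comm _ (2 : ℝ), ← Finset.mul_sum, hinner]
  ring

theorem sum_mul_sum_norm_sub_sq_le {ι κ E : Type*} [Fintype κ] [NormedAddCommGroup E]
    [InnerProductSpace ℝ E] {s : Finset ι} {w : ι → ℝ} (hw : ∑ i ∈ s, w i = 1) (x : ι → κ → E) :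
    ∑ i ∈ s, w i * ∑ j, ‖x i j - ∑ k ∈ s, w k • x k j‖ ^ 2 ≤ ∑ i ∈ s, w i * ∑ j, ‖x i j‖ ^ 2 := by
  simp only [Finset.mul_sum]
  rw [Finset.sum_comm, Finset.sum_comm (s := s)]
  exact Finset.sum_le_sum fun j _ =>
    (sum_mul_norm_sub_sq_eq hw).trans_le (sub_le_self _ (sq_nonneg _))

theorem sum_smul_div_mul_of_imp {ι : Type*} {s : Finset ι} {p : ι → ℝ} {c b : ι → ℂ}
    (h : ∀ i, (p i : ℂ) = 0 → b i = 0) : ∑ i ∈ s, p i • (c i / p i * b i) = ∑ i ∈ s, c i * b i :=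
  Finset.sum_congr rfl fun i _ => by
    rw [Complex.real_smul, div_mul_eq_mul_div, mul_div_cancel_of_imp' fun hp => by simp [h i hp]]

theorem norm_sum_sq_le_card_mul {ι E : Type*} [SeminormedAddCommGroup E] (s : Finset ι)
    (f : ι → E) : ‖∑ i ∈ s, f i‖ ^ 2 ≤ s.card * ∑ i ∈ s, ‖f i‖ ^ 2 :=
  (pow_le_pow_left₀ (norm_nonneg _) (norm_sum_le _ _) 2).trans sq_sum_le_card_mul_sum_sq

section vnorm

variable {n : Type*} [Fintype n]

theorem vnorm_eq_norm (v : n → ℂ) : vnorm v = ‖(WithLp.toLp 2 v : EuclideanSpace ℂ n)‖ := by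
  rw [EuclideanSpace.norm_eq]; rfl

theorem vnorm_sq (v : n → ℂ) : vnorm v ^ 2 = ∑ i, ‖v i‖ ^ 2 :=
  Real.sq_sqrt (by positivity)

theorem vnorm_smul (c : ℂ) (v : n → ℂ) : vnorm (c • v) = ‖c‖ * vnorm v := by
  simp only [vnorm_eq_norm, WithLp.toLp_smul, norm_smul]

theorem vnorm_sum_sq_le {ι : Type*} [Fintype ι] (v : ι → n → ℂ) :
    vnorm (∑ ℓ, v ℓ) ^ 2 ≤ Fintype.card ι * ∑ ℓ, vnorm (v ℓ) ^ 2 := by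
  simpa only [vnorm_eq_norm, WithLp.toLp_sum, Finset.card_univ] using
    norm_sum_sq_le_card_mul Finset.univ fun ℓ => (WithLp.toLp 2 (v ℓ) : EuclideanSpace ℂ n)

theorem mul_vnorm_div_smul_sq_le {p r : ℝ} (hp : 0 ≤ p) (hr : 0 ≤ r) (c : ℂ) {v : n → ℂ}
    (hv : vnorm v ^ 2 ≤ p * r) : p * vnorm ((c / p) • v) ^ 2 ≤ ‖c‖ ^ 2 * r := by
  rcases hp.eq_or_lt with rfl | hp
  · simpa using mul_nonneg (sq_nonneg ‖c‖) hr
  rw [vnorm_smul, norm_div, Complex.norm_real, Real.norm_of_nonneg hp.le]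
  calc p * (‖c‖ / p * vnorm v) ^ 2 = ‖c‖ ^ 2 * (vnorm v ^ 2 / p) := by field_simp
    _ ≤ ‖c‖ ^ 2 * r := by gcongr; rwa [div_le_iff₀' hp]

end vnorm

theorem frobNorm_sq_eq_sum_vnorm_sq {m n : Type*} [Fintype m] [Fintype n] (M : Matrix m n ℂ) :
    frobNorm M ^ 2 = ∑ i, vnorm (M i) ^ 2 := by
  simp only [frobNorm, vnorm_sq]
  exact Real.sq_sqrt (by positivity)

theorem sum_row_weight_eq_one {m n τ : Type*} [Fintype m] [Fintype n] [Fintype τ]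
    {A : τ → Matrix m n ℂ} (hA : ∑ ℓ, frobNorm (A ℓ) ^ 2 ≠ 0) :
    ∑ i, (∑ ℓ, vnorm (A ℓ i) ^ 2) / ∑ ℓ, frobNorm (A ℓ) ^ 2 = 1 := by
  rw [← Finset.sum_div, Finset.sum_comm, div_eq_one_iff_eq hA]
  simp only [frobNorm_sq_eq_sum_vnorm_sq]

theorem vnorm_sum_apply_sq_le {m n τ : Type*} [Fintype n] [Fintype τ]
    (A : τ → Matrix m n ℂ) (i : m) :
    vnorm ((∑ ℓ, A ℓ) i) ^ 2 ≤ Fintype.card τ * ∑ ℓ, vnorm (A ℓ i) ^ 2 := by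
  rw [show (∑ ℓ, A ℓ) i = ∑ ℓ, A ℓ i from Finset.sum_apply i _ A]
  exact vnorm_sum_sq_le fun ℓ => A ℓ i

/-- Weighted sampling of a row estimator: `E[X] = u†A` and second moment bound `τ Σ‖A_ℓ‖_F²`. -/
theorem stmt3 {n τ : ℕ} (A : Fin τ → Matrix (Fin n) (Fin n) ℂ)
    (u : Fin n → ℂ) (hu : vnorm u = 1)
    (P : Fin n → ℝ)
    (hP : ∀ i, P i = (∑ ℓ, vnorm (A ℓ i) ^ 2) / ∑ ℓ, frobNorm (A ℓ) ^ 2)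
    (hPpos : ∀ i, (∑ ℓ, A ℓ) i ≠ 0 → 0 < P i)
    (X : Fin n → Fin n → ℂ)
    (hX : ∀ i j, X i j = (starRingEnd ℂ (u i) / (P i : ℂ)) * (∑ ℓ, A ℓ) i j)
    (ν : Measure (Fin n))
    (hν : ν = Measure.sum fun i : Fin n => ENNReal.ofReal (P i) • Measure.dirac i) :
    (∀ j, ∫ i, X i j ∂ν = (star u ᵥ* (∑ ℓ, A ℓ)) j) ∧
      (∫ i, (∑ j, ‖X i j - (star u ᵥ* (∑ ℓ, A ℓ)) j‖ ^ 2) ∂ν) ≤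
        (τ : ℝ) * ∑ ℓ, frobNorm (A ℓ) ^ 2 := by
  set B := ∑ ℓ, A ℓ
  set S := ∑ ℓ, frobNorm (A ℓ) ^ 2
  have hPnn : ∀ i, 0 ≤ P i := fun i => hP i ▸ by positivity
  have hmean : ∀ j, ∑ i, P i • X i j = (star u ᵥ* B) j := fun j => by
    simp only [hX, vecMul, dotProduct, Pi.star_apply, Complex.star_def]
    exact sum_smul_div_mul_of_imp fun i hPi =>
      congrFun (not_not.1 fun hB => (hPpos i hB).ne' (by exact_mod_cast hPi)) j
  subst hν
  simp only [integral_sum_ofReal_smul_dirac hPnn, smul_eq_mul]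
  refine ⟨hmean, ?_⟩
  rcases (show 0 ≤ S by positivity).eq_or_lt with hS | hS
  · simp [hP, ← hS]
  have hP1 : ∑ i, P i = 1 :=
    (Finset.sum_congr rfl fun i _ => hP i).trans (sum_row_weight_eq_one hS.ne')
  have hsecond : ∀ i, P i * ∑ j, ‖X i j‖ ^ 2 ≤ ‖u i‖ ^ 2 * (τ * S) := fun i => by
    rw [← vnorm_sq, show X i = _ from funext (hX i), ← Complex.norm_conj (u i)]
    refine mul_vnorm_div_smul_sq_le (hPnn i) (by positivity) _
      ((vnorm_sum_apply_sq_le A i).trans_eq ?_)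
    rw [hP i, Fintype.card_fin]
    field_simp
  calc ∑ i, P i * ∑ j, ‖X i j - (star u ᵥ* B) j‖ ^ 2
      ≤ ∑ i, P i * ∑ j, ‖X i j‖ ^ 2 := by
        simpa only [hmean] using sum_mul_sum_norm_sub_sq_le hP1 X
    _ ≤ ∑ i, ‖u i‖ ^ 2 * (τ * S) := Finset.sum_le_sum fun i _ => hsecond i
    _ = τ * S := by rw [← Finset.sum_mul, ← vnorm_sq, hu, one_pow, one_mul]
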